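/- Let S be a surface (a connected Hausdorff topological 2-manifold), f : S → S a homeomorphism, and U ⊆ S an open simply connected f-invariant set with S∖U having more than one point. Suppose there is a compact set K ⊆ U such that U∖K does not contain the forward or backward orbit of any f-wandering open set; that is, there is no nonempty open set W with f^k(W) ∩ W = ∅ for all integers k ≠ 0 such that f^k(W) ⊆ U∖K for all k ≥ 0, and no such W with f^k(W) ⊆ U∖K for all k ≤ 0. Then f is ∂-nonwandering in U. In particular, this holds if there is a compact K ⊆ U such that U∖K is contained in the nonwandering set of f. -/

import Mathlib

/-! Put `K' = ⋃_{|j| < n} f^j K`. If no positive `f^n`-iterate of an `f^n`-wandering cross-section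
`D` met `K'`, then no `f^m D` with `m ≥ 1` would meet `K`. An `f^n`-wandering open set contains an
`f`-wandering open subset (shrink it once for each residue class mod `n`), so `f(D)` would contain
an `f`-wandering open set whose forward orbit stays in `U ∖ K`. Backward iterates are handled by
applying the same argument to `f⁻¹`. -/

open Set Topology Filter

noncomputable section

universe u

variable {X : Type u} [TopologicalSpace X]

/-- A homeomorphism is *orientation preserving* if it is isotopic to the identity. -/
def IsOrientationPreserving (f : X ≃ₜ X) : Prop :=
  ∃ H : unitInterval × X → X,
    Continuous H ∧ (∀ x, H (0, x) = x) ∧ (∀ x, H (1, x) = f x) ∧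
      ∀ t : unitInterval, IsHomeomorph fun x => H (t, x)

/-- `D` is a connected component of `A`. -/
def IsCompOf (A D : Set X) : Prop := ∃ x ∈ A, D = connectedComponentIn A x

/-- `A` has exactly two connected components, the distinct sets `D₁` and `D₂`. -/
def HasTwoComps (A D₁ D₂ : Set X) : Prop :=
  IsCompOf A D₁ ∧ IsCompOf A D₂ ∧ D₁ ≠ D₂ ∧
    ∀ x ∈ A, connectedComponentIn A x = D₁ ∨ connectedComponentIn A x = D₂

/-- A *cross-cut* of the open set `U`: the image of an arc `g` on `(0,1)`, where `g` is
continuous and injective on `[0,1]`'s interior, runs inside `U`, has endpoints on `∂U`, and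
separates `U` into exactly two components, each with a boundary point on `∂U` away from the
closed arc. -/
def IsCrossCut (U γ : Set X) : Prop :=
  ∃ g : ℝ → X,
    ContinuousOn g (Icc 0 1) ∧ InjOn g (Ioo 0 1) ∧ (∀ t ∈ Ioo (0:ℝ) 1, g t ∈ U) ∧
      g 0 ∈ frontier U ∧ g 1 ∈ frontier U ∧ γ = g '' Ioo 0 1 ∧
      ∃ D₁ D₂ : Set X, HasTwoComps (U \ γ) D₁ D₂ ∧
        (frontier D₁ ∩ (frontier U \ g '' Icc 0 1)).Nonempty ∧
        (frontier D₂ ∩ (frontier U \ g '' Icc 0 1)).Nonempty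

/-- A *cross-section* of `U`: a connected component of `U ∖ γ` for a cross-cut `γ`. -/
def IsCrossSection (U D : Set X) : Prop := ∃ γ : Set X, IsCrossCut U γ ∧ IsCompOf (U \ γ) D

/-- The image of a set under the `k`-th integer iterate of a homeomorphism. -/
def iterZ (f : X ≃ₜ X) (k : ℤ) (A : Set X) : Set X := ⇑(f.toEquiv ^ k) '' A

/-- A cross-section of `U` which is wandering for `f^n`. -/
def IsWanderingSection (f : X ≃ₜ X) (U : Set X) (n : ℕ) (D : Set X) : Prop :=
  IsCrossSection U D ∧ ∀ k : ℤ, k ≠ 0 → iterZ f ((n : ℤ) * k) D ∩ D = ∅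

/-- `f` is ∂-nonwandering in `U`. -/
def BdNonwandering (f : X ≃ₜ X) (U : Set X) : Prop :=
  ∀ n : ℕ, 1 ≤ n → ∃ K : Set X, IsCompact K ∧ K ⊆ U ∧
    ∀ D : Set X, IsWanderingSection f U n D →
      (∃ k : ℤ, 0 < k ∧ (iterZ f ((n : ℤ) * k) D ∩ K).Nonempty) ∧
      (∃ k : ℤ, k < 0 ∧ (iterZ f ((n : ℤ) * k) D ∩ K).Nonempty)

/-- The boundary of `D` inside `U` (for `D` open in `U`). -/
def bdIn (U D : Set X) : Set X := (closure D \ D) ∩ U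

/-- A chain of cross-sections of `U`. -/
def IsPEChain (U : Set X) (D : ℕ → Set X) : Prop :=
  (∀ i, IsCrossSection U (D i)) ∧ (∀ i j : ℕ, j ≤ i → D i ⊆ D j) ∧
    ∀ i j : ℕ, i ≠ j → closure (bdIn U (D i)) ∩ closure (bdIn U (D j)) = ∅

/-- The chain `D` divides the cross-section `E`. -/
def ChainDividesSection (D : ℕ → Set X) (E : Set X) : Prop := ∃ N : ℕ, ∀ i, N ≤ i → D i ⊆ E

/-- The chain `D` divides the chain `D'`. -/
def ChainDivides (D D' : ℕ → Set X) : Prop := ∀ n : ℕ, ∃ m : ℕ, D m ⊆ D' n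

/-- A prime chain: a chain dividing every chain that divides it. -/
def IsPrimeChain (U : Set X) (D : ℕ → Set X) : Prop :=
  IsPEChain U D ∧ ∀ D' : ℕ → Set X, IsPEChain U D' → ChainDivides D' D → ChainDivides D D'

/-- The type of prime chains of `U`. -/
def PrimeChain (U : Set X) : Type u := {D : ℕ → Set X // IsPrimeChain U D}

/-- A prime end of `U`: an equivalence class of prime chains. -/
def PrimeEnd (U : Set X) : Type u :=
  Quot fun C C' : PrimeChain U => ChainDivides C.1 C'.1 ∧ ChainDivides C'.1 C.1

/-- The prime end `p` divides the cross-section `E`. -/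
def PrimeEndDivides {U : Set X} (p : PrimeEnd U) (E : Set X) : Prop :=
  ∃ C : PrimeChain U, Quot.mk _ C = p ∧ ChainDividesSection C.1 E

/-- The prime ends compactification of `U` (as a set: `U ⊔ (prime ends)`). -/
def PrimeEndComp (U : Set X) : Type u := ↥U ⊕ PrimeEnd U

/-- A point of `U`, as an element of the prime ends compactification. -/
def pePt (U : Set X) (x : ↥U) : PrimeEndComp U := Sum.inl x

/-- A prime end, as an element of the prime ends compactification. -/
def peEnd (U : Set X) (p : PrimeEnd U) : PrimeEndComp U := Sum.inr p

/-- The copy of a subset `V ⊆ U` inside the prime ends compactification. -/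
def peOpen (U V : Set X) : Set (PrimeEndComp U) := {z | ∃ x : ↥U, z = pePt U x ∧ (x : X) ∈ V}

/-- The basic set `E ∪ i_E(E)` of the prime ends compactification, for a cross-section `E`. -/
def peSection (U E : Set X) : Set (PrimeEndComp U) :=
  peOpen U E ∪ {z | ∃ p : PrimeEnd U, z = peEnd U p ∧ PrimeEndDivides p E}

/-- The topology of the prime ends compactification. -/
instance primeEndCompTopology (U : Set X) : TopologicalSpace (PrimeEndComp U) :=
  TopologicalSpace.generateFrom
    ({s | ∃ V : Set X, IsOpen V ∧ V ⊆ U ∧ s = peOpen U V} ∪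
      {s | ∃ E : Set X, IsCrossSection U E ∧ s = peSection U E})

/-- The circle of prime ends, as a subset of the prime ends compactification. -/
def PrimeEndCircle (U : Set X) : Set (PrimeEndComp U) := Set.range (peEnd U)

/-- `F` is an extension of `f|_U` to the prime ends compactification of `U`. -/
def IsPEExtension (f : X ≃ₜ X) (U : Set X) (F : PrimeEndComp U ≃ₜ PrimeEndComp U) : Prop :=
  ∀ (x : X) (hx : x ∈ U) (hfx : f x ∈ U), F (pePt U ⟨x, hx⟩) = pePt U ⟨f x, hfx⟩

/-- An end-cut of `U`: an injective arc in `U` defined on `[0,1)` converging in the ambient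
space as `t → 1⁻`. -/
def IsEndCut (U : Set X) (γ : ℝ → X) : Prop :=
  ContinuousOn γ (Ico 0 1) ∧ InjOn γ (Ico 0 1) ∧ (∀ t ∈ Ico (0:ℝ) 1, γ t ∈ U) ∧
    ∃ z : X, Tendsto γ (𝓝[<] (1:ℝ)) (𝓝 z)

/-- `z` is an accessible point of `∂U`. -/
def IsAccessiblePoint (U : Set X) (z : X) : Prop :=
  ∃ γ : ℝ → X, IsEndCut U γ ∧ Tendsto γ (𝓝[<] (1:ℝ)) (𝓝 z)

/-- `p` is an accessible prime end of `U`. -/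
def IsAccessiblePrimeEnd (U : Set X) (p : PrimeEnd U) : Prop :=
  ∃ (γ : ℝ → X) (hγ : ∀ t ∈ Ico (0:ℝ) 1, γ t ∈ U), IsEndCut U γ ∧
    Tendsto (fun t : ↥(Ico (0:ℝ) 1) => pePt U ⟨γ ↑t, hγ ↑t t.2⟩)
      (comap Subtype.val (𝓝[<] (1:ℝ))) (𝓝 (peEnd U p))

/-- A translation arc for `f` based at `x`: a simple arc from `x` to `f x` meeting its image
only as allowed. -/
def IsTranslationArc (f : X ≃ₜ X) (γ : Set X) (x : X) : Prop :=
  f x ≠ x ∧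
    ∃ g : ℝ → X, ContinuousOn g (Icc 0 1) ∧ InjOn g (Icc 0 1) ∧
      g 0 = x ∧ g 1 = f x ∧ γ = g '' Icc 0 1 ∧
      ((⇑f '' γ) ∩ γ = {f x} ∨ ((⇑f '' γ) ∩ γ = {x, f x} ∧ f (f x) = x))

/-- An `N`-translation arc for `f` based at `x` (for `N = 1` this is just a translation arc). -/
def IsNTranslationArc (f : X ≃ₜ X) (N : ℕ) (γ : Set X) (x : X) : Prop :=
  IsTranslationArc f γ x ∧
    (2 ≤ N →
      (∀ k : ℕ, 2 ≤ k → k ≤ N - 1 → (⇑f)^[k] '' γ ∩ γ = ∅) ∧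
        ((⇑f)^[N] '' γ ∩ γ = ∅ ∨ ((⇑f)^[N] '' γ ∩ γ = {x} ∧ (⇑f)^[N + 1] x = x)))

/-- An ∞-translation arc: an `N`-translation arc for every `N ≥ 1`. -/
def IsInfTranslationArc (f : X ≃ₜ X) (γ : Set X) (x : X) : Prop :=
  ∀ N : ℕ, 1 ≤ N → IsNTranslationArc f N γ x

/-- A nonwandering homeomorphism. -/
def IsNonwanderingMap (f : X → X) : Prop :=
  ∀ V : Set X, IsOpen V → V.Nonempty → ∃ n : ℕ, 1 ≤ n ∧ (f^[n] '' V ∩ V).Nonempty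

/-- A loop contained in `A` which is not null-homotopic in `V`. -/
def IsEssentialLoopIn (V A : Set X) : Prop :=
  ∃ (z : ↥V) (δ : Path z z), (∀ t : unitInterval, (↑(δ t) : X) ∈ A) ∧
    ¬ δ.Homotopic (Path.refl z)

/-- An annular continuum: a continuum with an open annular neighborhood `V` such that `V ∖ K`
has exactly two components, each essential in `V`. -/
def IsAnnularContinuum (K : Set X) : Prop :=
  IsCompact K ∧ IsConnected K ∧ K.Nontrivial ∧
    ∃ V : Set X, IsOpen V ∧ K ⊆ V ∧
      Nonempty (↥V ≃ₜ AddCircle (1 : ℝ) × ↥(Ioo (0 : ℝ) 1)) ∧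
      ∃ D₁ D₂ : Set X, HasTwoComps (V \ K) D₁ D₂ ∧
        IsEssentialLoopIn V D₁ ∧ IsEssentialLoopIn V D₂

/-- A set contractible in the ambient surface: it has an open neighborhood homeomorphic to the
plane. -/
def ContractibleInSurface (K : Set X) : Prop :=
  ∃ W : Set X, IsOpen W ∧ K ⊆ W ∧ Nonempty (↥W ≃ₜ (ℝ × ℝ))

/-- `α ∈ ℝ/ℤ` is rational. -/
def IsRationalAC (α : AddCircle (1 : ℝ)) : Prop := ∃ r : ℚ, α = ((r : ℝ) : AddCircle (1 : ℝ))

/-- The constant `q(α,g)`: the smallest positive integer `q` with `‖qα‖ = 0` if `α` is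
rational, and `(2g+1)‖qα‖ < ‖α‖` if `α` is irrational. -/
def qConst (α : AddCircle (1 : ℝ)) (g : ℕ) : ℕ :=
  sInf {q : ℕ | 0 < q ∧
    ((IsRationalAC α ∧ ‖q • α‖ = 0) ∨
      (¬IsRationalAC α ∧ ((2 * g + 1 : ℕ) : ℝ) * ‖q • α‖ < ‖α‖))}

namespace Homeomorph

variable (f : X ≃ₜ X)

theorem coe_toEquiv_zpow (k : ℤ) : ⇑(f.toEquiv ^ k) = ⇑(f ^ k) :=
  let toPerm : (X ≃ₜ X) →* Equiv.Perm X :=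
    { toFun := Homeomorph.toEquiv, map_one' := rfl, map_mul' := fun _ _ => rfl }
  congrArg DFunLike.coe (map_zpow toPerm f k).symm

end Homeomorph

section IterZ

variable {f : X ≃ₜ X} {A B : Set X}

theorem iterZ_eq_image (f : X ≃ₜ X) (k : ℤ) (A : Set X) : iterZ f k A = ⇑(f ^ k) '' A := by
  rw [iterZ, f.coe_toEquiv_zpow]

@[simp]
theorem iterZ_zero (f : X ≃ₜ X) (A : Set X) : iterZ f 0 A = A := by
  rw [iterZ_eq_image, zpow_zero]
  exact image_id A

theorem iterZ_iterZ (f : X ≃ₜ X) (a b : ℤ) (A : Set X) :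
    iterZ f a (iterZ f b A) = iterZ f (a + b) A := by
  simp only [iterZ_eq_image, image_image, zpow_add]
  rfl

theorem iterZ_symm (f : X ≃ₜ X) (k : ℤ) (A : Set X) : iterZ f.symm k A = iterZ f (-k) A := by
  rw [iterZ_eq_image, iterZ_eq_image, zpow_neg, ← inv_zpow]
  rfl

theorem iterZ_mono (k : ℤ) (h : A ⊆ B) : iterZ f k A ⊆ iterZ f k B := image_mono h

theorem disjoint_iterZ_iff (k : ℤ) : Disjoint (iterZ f k A) (iterZ f k B) ↔ Disjoint A B := by
  simp only [iterZ_eq_image]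
  exact disjoint_image_iff (f ^ k).injective

theorem Set.Nonempty.iterZ (k : ℤ) (h : A.Nonempty) : (iterZ f k A).Nonempty := h.image _

theorem IsOpen.iterZ (k : ℤ) (h : IsOpen A) : IsOpen (iterZ f k A) := by
  rw [iterZ_eq_image]
  exact (f ^ k).isOpenMap A h

theorem IsCompact.iterZ (k : ℤ) (h : IsCompact A) : IsCompact (iterZ f k A) := by
  rw [iterZ_eq_image]
  exact h.image (f ^ k).continuous

theorem symm_image_eq_of_image_eq (h : ⇑f '' A = A) : ⇑f.symm '' A = A := by
  conv_lhs => rw [← h]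
  exact f.symm_image_image A

theorem iterZ_eq_self_of_image_eq (h : ⇑f '' A = A) (k : ℤ) : iterZ f k A = A := by
  have h_inv := symm_image_eq_of_image_eq h
  induction k using Int.induction_on with
  | zero => exact iterZ_zero f A
  | succ i ih => rwa [add_comm, ← iterZ_iterZ, ih, iterZ_eq_image, zpow_one]
  | pred i ih => rwa [sub_eq_neg_add, ← iterZ_iterZ, ih, iterZ_eq_image, zpow_neg_one]

end IterZ

def IsWanderingSet (f : X ≃ₜ X) (n : ℕ) (A : Set X) : Prop :=
  ∀ k : ℤ, k ≠ 0 → Disjoint (iterZ f ((n : ℤ) * k) A) A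

section Wandering

variable {f : X ≃ₜ X} {n : ℕ} {A B W : Set X}

theorem IsWanderingSet.mono (hA : IsWanderingSet f n A) (hBA : B ⊆ A) : IsWanderingSet f n B :=
  fun k hk => (hA k hk).mono (iterZ_mono _ hBA) hBA

theorem IsWanderingSet.translate (hA : IsWanderingSet f n A) (c : ℤ) :
    IsWanderingSet f n (iterZ f c A) := by
  intro k hk
  rw [iterZ_iterZ, add_comm, ← iterZ_iterZ, disjoint_iterZ_iff]
  exact hA k hk

theorem IsWanderingSet.symm (hA : IsWanderingSet f n A) : IsWanderingSet f.symm n A := by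
  intro k hk
  rw [iterZ_symm, ← mul_neg]
  exact hA (-k) (neg_ne_zero.mpr hk)

theorem isWanderingSet_one_iff :
    IsWanderingSet f 1 A ↔ ∀ k : ℤ, k ≠ 0 → iterZ f k A ∩ A = ∅ := by
  simp only [IsWanderingSet, Nat.cast_one, one_mul, disjoint_iff_inter_eq_empty]

/- The sets `S j = W ∩ f^k W ∩ ⋯ ∩ f^(j k) W` satisfy `f^k (S j) ∩ S j ⊆ S (j + 1)` and
`S n = ∅`, so one of them is a nonempty open set disjoint from its `f^k`-image. -/
theorem exists_subset_inter_iterZ_disjoint (hWo : IsOpen W) {k : ℤ}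
    (hk : ¬Disjoint (iterZ f k W) W) (hnk : Disjoint (iterZ f ((n : ℤ) * k) W) W) :
    ∃ V, IsOpen V ∧ V.Nonempty ∧ V ⊆ W ∩ iterZ f k W ∧ Disjoint (iterZ f k V) V := by
  by_contra! hV
  set S : ℕ → Set X := fun j => (fun T => W ∩ iterZ f k T)^[j] W
  have hS_succ (j : ℕ) : S (j + 1) = W ∩ iterZ f k (S j) :=
    Function.iterate_succ_apply' _ _ _
  have hS_open (j : ℕ) : IsOpen (S j) := by
    induction j with
    | zero => exact hWo
    | succ j ih => rw [hS_succ]; exact hWo.inter (ih.iterZ k)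
  have hS_sub (j : ℕ) : S j ⊆ W ∩ iterZ f ((j : ℤ) * k) W := by
    induction j with
    | zero => simp [S]
    | succ j ih =>
      rw [hS_succ]
      refine inter_subset_inter_right W ((iterZ_mono k (ih.trans inter_subset_right)).trans ?_)
      rw [iterZ_iterZ, show k + (j : ℤ) * k = ((j + 1 : ℕ) : ℤ) * k by push_cast; ring]
  have hS_ne (j : ℕ) : (S (j + 1)).Nonempty := by
    induction j with
    | zero => rw [hS_succ, inter_comm]; exact not_disjoint_iff_nonempty_inter.mp hk
    | succ j ih =>
      have hsub : S (j + 1) ⊆ W ∩ iterZ f k W := by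
        rw [hS_succ]
        exact inter_subset_inter_right W (iterZ_mono k ((hS_sub j).trans inter_subset_left))
      obtain ⟨x, hx₁, hx₂⟩ := not_disjoint_iff.mp (hV _ (hS_open _) ih hsub)
      exact ⟨x, by rw [hS_succ]; exact ⟨(hS_sub _ hx₂).1, hx₁⟩⟩
  have hSn_ne : (S n).Nonempty := by
    cases n with
    | zero => exact (not_disjoint_iff_nonempty_inter.mp hk).mono inter_subset_right
    | succ m => exact hS_ne m
  obtain ⟨x, hx⟩ := hSn_ne
  exact disjoint_left.mp hnk (hS_sub n hx).2 (hS_sub n hx).1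

theorem IsWanderingSet.exists_subset_disjoint_of_modEq (hA : IsWanderingSet f n A)
    (hAo : IsOpen A) (hAne : A.Nonempty) (r : ℤ) :
    ∃ W ⊆ A, IsOpen W ∧ W.Nonempty ∧
      ∀ k : ℤ, k ≠ 0 → k ≡ r [ZMOD n] → Disjoint (iterZ f k W) W := by
  by_cases hr : ∀ k : ℤ, k ≠ 0 → k ≡ r [ZMOD n] → Disjoint (iterZ f k A) A
  · exact ⟨A, subset_rfl, hAo, hAne, hr⟩
  push Not at hr
  obtain ⟨k₀, hk₀, hk₀r, hmeet⟩ := hr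
  obtain ⟨W, hWo, hWne, hWA, hW⟩ := exists_subset_inter_iterZ_disjoint hAo hmeet (hA k₀ hk₀)
  refine ⟨W, hWA.trans inter_subset_left, hWo, hWne, fun k hk hkr => ?_⟩
  -- `W ⊆ f^k₀ A` and every other `k ≡ k₀` moves `A` off `f^k₀ A`.
  obtain ⟨m, hm⟩ := (hk₀r.trans hkr.symm).dvd
  rcases eq_or_ne m 0 with rfl | hm0
  · obtain rfl : k = k₀ := by linarith
    exact hW
  have hAk : Disjoint (iterZ f k A) (iterZ f k₀ A) := by
    rw [← disjoint_iterZ_iff (-k₀), iterZ_iterZ, iterZ_iterZ, neg_add_cancel, iterZ_zero,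
      neg_add_eq_sub, hm]
    exact hA m hm0
  exact hAk.mono (iterZ_mono k (hWA.trans inter_subset_left)) (hWA.trans inter_subset_right)

theorem IsWanderingSet.exists_subset_isWanderingSet_one (hA : IsWanderingSet f n A)
    (hn : 0 < n) (hAo : IsOpen A) (hAne : A.Nonempty) :
    ∃ W ⊆ A, IsOpen W ∧ W.Nonempty ∧ IsWanderingSet f 1 W := by
  have h_residues (s : Finset ℤ) : ∃ W ⊆ A, IsOpen W ∧ W.Nonempty ∧
      ∀ k : ℤ, k ≠ 0 → (∃ r ∈ s, k ≡ r [ZMOD n]) → Disjoint (iterZ f k W) W := by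
    induction s using Finset.induction_on with
    | empty => exact ⟨A, subset_rfl, hAo, hAne, by simp⟩
    | insert r s _ ih =>
      obtain ⟨W, hWA, hWo, hWne, hW⟩ := ih
      obtain ⟨V, hVW, hVo, hVne, hV⟩ := (hA.mono hWA).exists_subset_disjoint_of_modEq hWo hWne r
      refine ⟨V, hVW.trans hWA, hVo, hVne, fun k hk ⟨r', hr', hkr'⟩ => ?_⟩
      rcases Finset.mem_insert.mp hr' with rfl | hr'
      · exact hV k hk hkr'
      · exact (hW k hk ⟨r', hr', hkr'⟩).mono (iterZ_mono k hVW) hVW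
  obtain ⟨W, hWA, hWo, hWne, hW⟩ := h_residues (Finset.Ico 0 n)
  refine ⟨W, hWA, hWo, hWne, fun k hk => ?_⟩
  have hn' : (0 : ℤ) < n := by exact_mod_cast hn
  rw [Nat.cast_one, one_mul]
  exact hW k hk ⟨k % n, Finset.mem_Ico.mpr ⟨Int.emod_nonneg k hn'.ne', Int.emod_lt_of_pos k hn'⟩,
    (Int.mod_modEq k n).symm⟩

end Wandering

def orbitSegment (f : X ≃ₜ X) (n : ℕ) (K : Set X) : Set X :=
  ⋃ j ∈ Ioo (-(n : ℤ)) n, iterZ f j K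

section OrbitSegment

variable {f : X ≃ₜ X} {n : ℕ} {K U : Set X}

theorem IsCompact.orbitSegment (hK : IsCompact K) : IsCompact (orbitSegment f n K) :=
  (finite_Ioo _ _).isCompact_biUnion fun j _ => hK.iterZ j

theorem orbitSegment_subset (hKU : K ⊆ U) (hU : ⇑f '' U = U) : orbitSegment f n K ⊆ U :=
  iUnion₂_subset fun j _ => (iterZ_mono j hKU).trans (iterZ_eq_self_of_image_eq hU j).le

theorem iterZ_subset_orbitSegment {j : ℤ} (hj : |j| < n) : iterZ f j K ⊆ orbitSegment f n K :=
  subset_biUnion_of_mem (u := fun j => iterZ f j K) (mem_Ioo.mpr (abs_lt.mp hj))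

theorem orbitSegment_symm : orbitSegment f.symm n K = orbitSegment f n K := by
  simp only [orbitSegment, iterZ_symm]
  ext x
  simp only [mem_iUnion, mem_Ioo, exists_prop]
  constructor <;> rintro ⟨j, ⟨hj₁, hj₂⟩, hx⟩ <;> exact ⟨-j, ⟨by omega, by omega⟩, by simpa using hx⟩

/- Writing `m = n q - j` with `q ≥ 1` and `0 ≤ j < n`, the set `f^(n q) D = f^j (f^m D)` meets
`f^j K` as soon as `f^m D` meets `K`. -/
theorem disjoint_iterZ_of_disjoint_orbitSegment {D : Set X} (hn : 0 < n)
    (hD : ∀ q : ℤ, 0 < q → Disjoint (iterZ f (n * q) D) (orbitSegment f n K))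
    {m : ℤ} (hm : 0 < m) : Disjoint (iterZ f m D) K := by
  have hn' : (0 : ℤ) < n := by exact_mod_cast hn
  set q := (m - 1) / n + 1 with hq
  have h_nq : (n : ℤ) * q = n * ((m - 1) / n) + n := by rw [hq]; ring
  have h_div := Int.mul_ediv_add_emod (m - 1) n
  have h_mod := Int.emod_lt_of_pos (m - 1) hn'
  have h_mod' := Int.emod_nonneg (m - 1) hn'.ne'
  have h_q : 0 < q := by have := Int.ediv_nonneg (by omega : 0 ≤ m - 1) hn'.le; omega
  rw [← disjoint_iterZ_iff (n * q - m), iterZ_iterZ, sub_add_cancel]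
  exact (hD q h_q).mono_right (iterZ_subset_orbitSegment (abs_lt.mpr ⟨by omega, by omega⟩))

end OrbitSegment

section CrossSection

variable {U γ D : Set X}

/- The endpoints of a cross-cut lie on `∂U`, hence outside the open set `U`, so removing the open
arc from `U` is the same as removing the compact closed arc. -/
theorem IsCrossCut.isOpen_diff [T2Space X] (hU : IsOpen U) (hγ : IsCrossCut U γ) :
    IsOpen (U \ γ) := by
  obtain ⟨g, hg_cont, -, -, hg₀, hg₁, rfl, -⟩ := hγ
  rw [hU.frontier_eq] at hg₀ hg₁
  have h_arc : U \ g '' Ioo 0 1 = U \ g '' Icc 0 1 := by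
    rw [← Ico_insert_right zero_le_one, ← Ioo_insert_left zero_lt_one, image_insert_eq,
      image_insert_eq, sdiff_insert_of_notMem hg₁.2, sdiff_insert_of_notMem hg₀.2]
  rw [h_arc]
  exact hU.sdiff (isCompact_Icc.image_of_continuousOn hg_cont).isClosed

theorem IsCrossSection.isOpen [T2Space X] [LocallyConnectedSpace X] (hU : IsOpen U)
    (hD : IsCrossSection U D) : IsOpen D := by
  obtain ⟨γ, hγ, x, -, rfl⟩ := hD
  exact (hγ.isOpen_diff hU).connectedComponentIn

theorem IsCrossSection.nonempty (hD : IsCrossSection U D) : D.Nonempty := by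
  obtain ⟨γ, -, x, hx, rfl⟩ := hD
  exact ⟨x, mem_connectedComponentIn hx⟩

theorem IsCrossSection.subset (hD : IsCrossSection U D) : D ⊆ U := by
  obtain ⟨γ, -, x, -, rfl⟩ := hD
  exact (connectedComponentIn_subset _ _).trans sdiff_subset

end CrossSection

theorem exists_pos_iterZ_meets_orbitSegment {f : X ≃ₜ X} {U K D : Set X} {n : ℕ}
    (hU : ⇑f '' U = U)
    (hfwd : ¬∃ W : Set X, IsOpen W ∧ W.Nonempty ∧
      (∀ k : ℤ, k ≠ 0 → iterZ f k W ∩ W = ∅) ∧ ∀ k : ℤ, 0 ≤ k → iterZ f k W ⊆ U \ K)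
    (hn : 0 < n) (hDo : IsOpen D) (hDne : D.Nonempty) (hDU : D ⊆ U)
    (hD : IsWanderingSet f n D) :
    ∃ k : ℤ, 0 < k ∧ (iterZ f (n * k) D ∩ orbitSegment f n K).Nonempty := by
  by_contra! h_miss
  have hK : ∀ m : ℤ, 0 < m → Disjoint (iterZ f m D) K :=
    fun m => disjoint_iterZ_of_disjoint_orbitSegment hn
      (fun q hq => disjoint_iff_inter_eq_empty.mpr (h_miss q hq))
  obtain ⟨W, hWD, hWo, hWne, hW⟩ :=
    (hD.translate 1).exists_subset_isWanderingSet_one hn (hDo.iterZ 1) (hDne.iterZ 1)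
  refine hfwd ⟨W, hWo, hWne, isWanderingSet_one_iff.mp hW, fun k hk => ?_⟩
  have hWk : iterZ f k W ⊆ iterZ f (k + 1) D := iterZ_iterZ f k 1 D ▸ iterZ_mono k hWD
  exact subset_sdiff.mpr ⟨hWk.trans ((iterZ_mono _ hDU).trans (iterZ_eq_self_of_image_eq hU _).le),
    (hK (k + 1) (by omega)).mono_left hWk⟩

theorem bd_nonwandering_of_no_wandering_open_orbit_general
    {X : Type*} [TopologicalSpace X] [T2Space X]
    [ChartedSpace (EuclideanSpace ℝ (Fin 2)) X]
    (f : X ≃ₜ X) (U : Set X) (hUopen : IsOpen U)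
    (hUinv : ⇑f '' U = U)
    (K : Set X) (hK : IsCompact K) (hKU : K ⊆ U)
    (hfwd : ¬∃ W : Set X, IsOpen W ∧ W.Nonempty ∧
      (∀ k : ℤ, k ≠ 0 → iterZ f k W ∩ W = ∅) ∧ ∀ k : ℤ, 0 ≤ k → iterZ f k W ⊆ U \ K)
    (hbwd : ¬∃ W : Set X, IsOpen W ∧ W.Nonempty ∧
      (∀ k : ℤ, k ≠ 0 → iterZ f k W ∩ W = ∅) ∧ ∀ k : ℤ, k ≤ 0 → iterZ f k W ⊆ U \ K) :
    BdNonwandering f U := by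
  have := ChartedSpace.locallyConnectedSpace (EuclideanSpace ℝ (Fin 2)) X
  have hbwd' : ¬∃ W : Set X, IsOpen W ∧ W.Nonempty ∧
      (∀ k : ℤ, k ≠ 0 → iterZ f.symm k W ∩ W = ∅) ∧ ∀ k : ℤ, 0 ≤ k → iterZ f.symm k W ⊆ U \ K := by
    rintro ⟨W, hWo, hWne, hW, hWU⟩
    refine hbwd ⟨W, hWo, hWne, fun k hk => ?_, fun k hk => ?_⟩
    · simpa [iterZ_symm] using hW (-k) (neg_ne_zero.mpr hk)
    · simpa [iterZ_symm] using hWU (-k) (by omega)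
  intro n hn
  refine ⟨orbitSegment f n K, hK.orbitSegment, orbitSegment_subset hKU hUinv, fun D hD => ?_⟩
  have hDw : IsWanderingSet f n D := fun k hk => disjoint_iff_inter_eq_empty.mpr (hD.2 k hk)
  have hDo := hD.1.isOpen hUopen
  refine ⟨exists_pos_iterZ_meets_orbitSegment hUinv hfwd hn hDo hD.1.nonempty hD.1.subset hDw, ?_⟩
  obtain ⟨k, hk, hmeet⟩ := exists_pos_iterZ_meets_orbitSegment (symm_image_eq_of_image_eq hUinv)
    hbwd' hn hDo hD.1.nonempty hD.1.subset hDw.symm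
  refine ⟨-k, by omega, ?_⟩
  rwa [iterZ_symm, orbitSegment_symm, ← mul_neg] at hmeet

/-- If there is a compact `K ⊆ U` such that `U ∖ K` contains neither the
forward nor the backward orbit of any `f`-wandering open set, then `f` is ∂-nonwandering
in `U`. -/
theorem bd_nonwandering_of_no_wandering_open_orbit
    {X : Type*} [TopologicalSpace X] [T2Space X] [ConnectedSpace X]
    [ChartedSpace (EuclideanSpace ℝ (Fin 2)) X]
    (f : X ≃ₜ X) (U : Set X) (hUopen : IsOpen U) (hUsc : SimplyConnectedSpace ↥U)
    (hUinv : ⇑f '' U = U) (hUcompl : Set.Nontrivial Uᶜ)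
    (K : Set X) (hK : IsCompact K) (hKU : K ⊆ U)
    (hfwd : ¬∃ W : Set X, IsOpen W ∧ W.Nonempty ∧
      (∀ k : ℤ, k ≠ 0 → iterZ f k W ∩ W = ∅) ∧ ∀ k : ℤ, 0 ≤ k → iterZ f k W ⊆ U \ K)
    (hbwd : ¬∃ W : Set X, IsOpen W ∧ W.Nonempty ∧
      (∀ k : ℤ, k ≠ 0 → iterZ f k W ∩ W = ∅) ∧ ∀ k : ℤ, k ≤ 0 → iterZ f k W ⊆ U \ K) :
    BdNonwandering f U :=
  bd_nonwandering_of_no_wandering_open_orbit_general f U hUopen hUinv K hK hKU hfwd hbwd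

end
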